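/- For every integer r ≥ 1 and integer u ≥ 0, the partition λ^{r,u} = [5r+3u+2, u+2, 2, 2, …, 2 (3r+u copies of 2), 1, 1, …, 1 (r+2u copies of 1)] of n = 4(3r+2u+1) satisfies E₂(λ^{r,u}) = E₂((λ^{r,u})ᵗ) = 72r² + 32u² + 96ru + 42r + 28u + 6, and λ^{r,u} ≠ (λ^{r,u})ᵗ. -/

import Mathlib

/-!
Both diagrams have a Durfee square of side 2 and at most two superdiagonal cells `(b, b + 1)`,
so `E₂` is a sum of at most three products `h(a, a) · h(b, b + 1)` with `a ≤ b`. Each hook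
length is read off from the row lengths and the first two column lengths `4r + 3u + 2` and
`3r + u + 2`; transposition only swaps the indices of the hooks. The second row `u + 2` differs
from the second column `3r + u + 2` because `r ≥ 1`, so `λ^{r,u}` is not self-conjugate.
-/

/-- The hook length of the cell `(i, j)` (0-indexed) in a Young diagram. -/
def hookLen (lam : YoungDiagram) (i j : ℕ) : ℕ :=
  (lam.rowLen i - j) + (lam.colLen j - i) - 1

/-- The excitation factor `E_m(λ)` of the one-row partition `[m]` in `λ`:
`Σ_{i₁ ≤ … ≤ i_m} h_{i₁,i₁}·h_{i₂,i₂+1}⋯h_{i_m,i_m+m−1}` over tuples such that each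
cell `(i_t, i_t + t − 1)` lies in `λ` (0-indexed here: cell `(f t, f t + t)`). -/
noncomputable def excite (lam : YoungDiagram) (m : ℕ) : ℕ :=
  ∑ᶠ f ∈ {f : Fin m → ℕ | Monotone f ∧ ∀ t : Fin m, (f t, f t + (t : ℕ)) ∈ lam},
    ∏ t : Fin m, hookLen lam (f t) (f t + (t : ℕ))

namespace YoungDiagram

theorem card_eq_sum_rowLen (μ : YoungDiagram) :
    μ.card = ∑ i ∈ Finset.range (μ.colLen 0), μ.rowLen i := by
  have hcells : μ.cells = (Finset.range (μ.colLen 0)).biUnion μ.row := by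
    ext ⟨i, j⟩
    simp only [Finset.mem_biUnion, Finset.mem_range, mem_row_iff, mem_cells]
    constructor
    · intro h
      exact ⟨i, mem_iff_lt_colLen.mp (μ.up_left_mem le_rfl (Nat.zero_le j) h), h, rfl⟩
    · rintro ⟨i, -, h, rfl⟩
      exact h
  rw [YoungDiagram.card, hcells, Finset.card_biUnion]
  · simp only [rowLen_eq_card]
  · intro a _ b _ hab
    simp only [Finset.disjoint_left, mem_row_iff]
    rintro c ⟨-, rfl⟩ ⟨-, rfl⟩
    exact hab rfl

theorem colLen_eq_succ {μ : YoungDiagram} {i j : ℕ} (h : (i, j) ∈ μ) (h' : (i + 1, j) ∉ μ) :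
    μ.colLen j = i + 1 := by
  rw [mem_iff_lt_colLen] at h h'
  omega

end YoungDiagram

open YoungDiagram

theorem hookLen_transpose (μ : YoungDiagram) (i j : ℕ) :
    hookLen μ.transpose i j = hookLen μ j i := by
  rw [hookLen, hookLen, rowLen_transpose, colLen_transpose, add_comm]

theorem hookLen_eq_zero_of_notMem {μ : YoungDiagram} {i j : ℕ} (h : (i, j) ∉ μ) :
    hookLen μ i j = 0 := by
  rw [mem_iff_lt_rowLen, not_lt] at h
  have h' : μ.colLen j ≤ i := by
    by_contra! hlt
    exact (mem_iff_lt_rowLen.mp (mem_iff_lt_colLen.mpr hlt)).not_ge h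
  rw [hookLen]
  omega

theorem hookLen_eq_of_succ_notMem {μ : YoungDiagram} {i j : ℕ} (h : (i + 1, j) ∉ μ) :
    hookLen μ i j = μ.rowLen i - j := by
  by_cases hij : (i, j) ∈ μ
  · rw [hookLen, colLen_eq_succ hij h]
    omega
  · rw [mem_iff_lt_rowLen] at hij
    rw [hookLen_eq_zero_of_notMem (mem_iff_lt_rowLen.not.mpr hij)]
    omega

/-- Non-cells have hook length `0`, so `e` only has to bound the superdiagonal. -/
theorem excite_two_eq_sum (μ : YoungDiagram) (e : ℕ) (he : ∀ b, (b, b + 1) ∈ μ → b < e) :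
    excite μ 2 = ∑ b ∈ Finset.range e, ∑ a ∈ Finset.range (b + 1),
      hookLen μ a a * hookLen μ b (b + 1) := by
  let pairs : Finset (Σ _ : ℕ, ℕ) := (Finset.range e).sigma fun b => Finset.range (b + 1)
  let vec : (Σ _ : ℕ, ℕ) → Fin 2 → ℕ := fun p => ![p.2, p.1]
  have hvec : Set.InjOn vec pairs := by
    rintro ⟨b, a⟩ - ⟨b', a'⟩ - h
    simp only [vec, Matrix.vecCons_inj, and_true] at h
    obtain ⟨rfl, rfl⟩ := h
    rfl
  have hexcite : excite μ 2 =
      ∑ f ∈ pairs.image vec, ∏ t : Fin 2, hookLen μ (f t) (f t + (t : ℕ)) := by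
    refine finsum_cond_eq_sum_of_cond_iff _ fun {f} hf => ?_
    obtain ⟨a, b, rfl⟩ : ∃ a b, f = ![a, b] := ⟨f 0, f 1, by ext i; fin_cases i <;> rfl⟩
    simp only [Fin.prod_univ_two, ne_eq, mul_eq_zero, not_or] at hf
    have hcells : (a, a) ∈ μ ∧ (b, b + 1) ∈ μ := by
      constructor <;> by_contra h
      · exact hf.1 (hookLen_eq_zero_of_notMem h)
      · exact hf.2 (hookLen_eq_zero_of_notMem h)
    simp [pairs, vec, hcells, Fin.forall_fin_two, he b hcells.2]
  rw [hexcite, Finset.sum_image hvec, Finset.sum_sigma]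
  simp [vec, Fin.prod_univ_two]

namespace LambdaRU

def rowLen (r u i : ℕ) : ℕ :=
  if i = 0 then 5 * r + 3 * u + 2
  else if i = 1 then u + 2
  else if i < 2 + (3 * r + u) then 2
  else if i < 2 + (3 * r + u) + (r + 2 * u) then 1
  else 0

variable {r u : ℕ} {lam : YoungDiagram} (hrow : ∀ i, lam.rowLen i = rowLen r u i)
include hrow

theorem mem_iff {i j : ℕ} : (i, j) ∈ lam ↔ j < rowLen r u i := by
  rw [mem_iff_lt_rowLen, hrow]

theorem colLen_zero : lam.colLen 0 = 4 * r + 3 * u + 2 :=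
  colLen_eq_succ (i := 4 * r + 3 * u + 1) (by rw [mem_iff hrow]; grind [rowLen])
    (by rw [mem_iff hrow]; grind [rowLen])

theorem colLen_one : lam.colLen 1 = 3 * r + u + 2 :=
  colLen_eq_succ (i := 3 * r + u + 1) (by rw [mem_iff hrow]; grind [rowLen])
    (by rw [mem_iff hrow]; grind [rowLen])

theorem card_eq : lam.card = 4 * (3 * r + 2 * u + 1) := by
  have hmid : ∀ x ∈ Finset.range (3 * r + u), rowLen r u (2 + x) = 2 := by
    grind [rowLen]
  have htail : ∀ x ∈ Finset.range (r + 2 * u), rowLen r u (2 + (3 * r + u) + x) = 1 := by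
    grind [rowLen]
  rw [card_eq_sum_rowLen, colLen_zero hrow,
    show 4 * r + 3 * u + 2 = 2 + (3 * r + u) + (r + 2 * u) by ring,
    Finset.sum_range_add, Finset.sum_range_add]
  simp only [hrow]
  rw [Finset.sum_congr rfl hmid, Finset.sum_congr rfl htail, Finset.sum_const, Finset.sum_const,
    Finset.card_range, Finset.card_range, Finset.sum_range_succ, Finset.sum_range_one]
  grind [rowLen]

theorem hookLen_zero_zero : hookLen lam 0 0 = 9 * r + 6 * u + 3 := by
  rw [hookLen, hrow, colLen_zero hrow]; grind [rowLen]

theorem hookLen_zero_one : hookLen lam 0 1 = 8 * r + 4 * u + 2 := by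
  rw [hookLen, hrow, colLen_one hrow]; grind [rowLen]

theorem hookLen_one_zero : hookLen lam 1 0 = 4 * r + 4 * u + 2 := by
  rw [hookLen, hrow, colLen_zero hrow]; grind [rowLen]

theorem hookLen_one_one : hookLen lam 1 1 = 3 * r + 2 * u + 1 := by
  rw [hookLen, hrow, colLen_one hrow]; grind [rowLen]

theorem hookLen_one_two : hookLen lam 1 2 = u := by
  rw [hookLen_eq_of_succ_notMem (by rw [mem_iff hrow]; grind [rowLen]), hrow]; grind [rowLen]

theorem hookLen_two_one : hookLen lam 2 1 = 3 * r + u := by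
  rw [hookLen, hrow, colLen_one hrow]; grind [rowLen]

theorem excite_two_eq :
    excite lam 2 = 72 * r ^ 2 + 32 * u ^ 2 + 96 * r * u + 42 * r + 28 * u + 6 := by
  rw [excite_two_eq_sum lam 2 (by intro b; rw [mem_iff hrow]; grind [rowLen])]
  simp only [Finset.sum_range_succ, Finset.sum_range_zero, zero_add, hookLen_zero_zero hrow,
    hookLen_zero_one hrow, hookLen_one_one hrow, hookLen_one_two hrow]
  ring

theorem excite_two_transpose_eq :
    excite lam.transpose 2 = 72 * r ^ 2 + 32 * u ^ 2 + 96 * r * u + 42 * r + 28 * u + 6 := by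
  rw [excite_two_eq_sum lam.transpose 2
    (by intro b; rw [mem_transpose, Prod.swap_prod_mk, mem_iff hrow]; grind [rowLen])]
  simp only [Finset.sum_range_succ, Finset.sum_range_zero, zero_add, hookLen_transpose,
    hookLen_zero_zero hrow, hookLen_one_zero hrow, hookLen_one_one hrow, hookLen_two_one hrow]
  ring

theorem ne_transpose (hr : 1 ≤ r) : lam ≠ lam.transpose := by
  intro h
  have h1 := congrArg (YoungDiagram.rowLen · 1) h
  simp only [rowLen_transpose, colLen_one hrow, hrow] at h1
  grind [rowLen]

end LambdaRU

/-- for r ≥ 1, u ≥ 0, the partition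
λ^{r,u} = [5r+3u+2, u+2, 2^{3r+u}, 1^{r+2u}] is a partition of n = 4(3r+2u+1), is not
self-conjugate, and satisfies E₂(λ^{r,u}) = E₂((λ^{r,u})ᵗ) = 72r² + 32u² + 96ru + 42r + 28u + 6. -/
theorem excite_two_lambda_ru (r u : ℕ) (hr : 1 ≤ r) (lam : YoungDiagram)
    (hrow : ∀ i : ℕ, lam.rowLen i =
      if i = 0 then 5 * r + 3 * u + 2
      else if i = 1 then u + 2
      else if i < 2 + (3 * r + u) then 2
      else if i < 2 + (3 * r + u) + (r + 2 * u) then 1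
      else 0) :
    lam.card = 4 * (3 * r + 2 * u + 1) ∧
      excite lam 2 = 72 * r ^ 2 + 32 * u ^ 2 + 96 * r * u + 42 * r + 28 * u + 6 ∧
      excite lam.transpose 2 = 72 * r ^ 2 + 32 * u ^ 2 + 96 * r * u + 42 * r + 28 * u + 6 ∧
      lam ≠ lam.transpose :=
  ⟨LambdaRU.card_eq hrow, LambdaRU.excite_two_eq hrow, LambdaRU.excite_two_transpose_eq hrow,
    LambdaRU.ne_transpose hrow hr⟩
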